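/- Let f : ℝ → ℝ be continuously differentiable with f′(0) ≠ 0, and let γ > 0. Consider the regularized gradient vector field of the Dirac-GAN with zero-centered gradient penalty, ṽ(θ, ψ) = (−f′(θψ)ψ, f′(θψ)θ − γψ). Then the Jacobian matrix of ṽ at the equilibrium (0, 0) equals [[0, −f′(0)], [f′(0), −γ]], its complex eigenvalues are λ_{1/2} = −γ/2 ± √(γ²/4 − f′(0)²), and both eigenvalues have strictly negative real part. -/

import Mathlib

/-!
The field is `x ↦ A(x) x` with `A(θ, ψ) = [[0, -f'(θψ)], [f'(θψ), -γ]]` continuous, so its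
Jacobian at the origin is `A(0)`. That matrix has trace `-γ` and determinant `f'(0)²`, so its
eigenvalues are the roots of `λ² + γλ + f'(0)²`; a root with nonzero imaginary part has real part
`-γ/2`, and a real root cannot be `≥ 0` because all coefficients are positive.
-/

open Matrix

theorem hasFDerivAt_apply_self_zero {𝕜 E F : Type*} [NontriviallyNormedField 𝕜]
    [NormedAddCommGroup E] [NormedSpace 𝕜 E] [NormedAddCommGroup F] [NormedSpace 𝕜 F]
    {M : E → E →L[𝕜] F} (hM : ContinuousAt M 0) :
    HasFDerivAt (fun x => M x x) (M 0) 0 := by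
  rw [hasFDerivAt_iff_isLittleO_nhds_zero, Asymptotics.isLittleO_iff]
  intro ε hε
  have hclose : ∀ᶠ h in nhds (0 : E), ‖M h - M 0‖ ≤ ε := by
    filter_upwards [Metric.tendsto_nhds.mp hM ε hε] with h hh
    exact (dist_eq_norm (M h) (M 0) ▸ hh).le
  filter_upwards [hclose] with h hh
  calc ‖M (0 + h) (0 + h) - M 0 0 - M 0 h‖ = ‖(M h - M 0) h‖ := by simp
    _ ≤ ‖M h - M 0‖ * ‖h‖ := (M h - M 0).le_opNorm h
    _ ≤ ε * ‖h‖ := by gcongr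

theorem Matrix.hasFDerivAt_mulVec_self_zero {𝕜 n : Type*} [NontriviallyNormedField 𝕜]
    [CompleteSpace 𝕜] [Fintype n] [DecidableEq n] {A : (n → 𝕜) → Matrix n n 𝕜}
    (hA : ContinuousAt A 0) :
    HasFDerivAt (fun x => A x *ᵥ x) (LinearMap.toContinuousLinearMap (toLin' (A 0))) 0 := by
  let toCLM : Matrix n n 𝕜 →ₗ[𝕜] (n → 𝕜) →L[𝕜] (n → 𝕜) :=
    LinearMap.toContinuousLinearMap.toLinearMap ∘ₗ toLin'.toLinearMap
  exact hasFDerivAt_apply_self_zero (M := fun x => toCLM (A x))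
    (toCLM.continuous_of_finiteDimensional.continuousAt.comp hA)

theorem hasFDerivAt_diracGAN_penalizedField_zero {g : ℝ → ℝ} (hg : Continuous g) (γ : ℝ) :
    HasFDerivAt (fun x : Fin 2 → ℝ => ![-(g (x 0 * x 1)) * x 1, g (x 0 * x 1) * x 0 - γ * x 1])
      (LinearMap.toContinuousLinearMap (toLin' !![0, -(g 0); g 0, -γ])) 0 := by
  let A (x : Fin 2 → ℝ) : Matrix (Fin 2) (Fin 2) ℝ := !![0, -g (x 0 * x 1); g (x 0 * x 1), -γ]
  have hA : Continuous A :=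
    continuous_pi fun i => continuous_pi fun j => by
      fin_cases i <;> fin_cases j <;> simp [A] <;> fun_prop
  have hvA : ∀ x, A x *ᵥ x = ![-(g (x 0 * x 1)) * x 1, g (x 0 * x 1) * x 0 - γ * x 1] := by
    intro x
    ext i
    fin_cases i <;> simp [A, mulVec, dotProduct, Fin.sum_univ_two, mul_comm, sub_eq_add_neg]
  simpa [hvA, A] using hasFDerivAt_mulVec_self_zero hA.continuousAt

theorem Matrix.mem_spectrum_fin_two_iff {K : Type*} [Field K] (A : Matrix (Fin 2) (Fin 2) K)
    (μ : K) : μ ∈ spectrum K A ↔ μ ^ 2 - A.trace * μ + A.det = 0 := by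
  simp [mem_spectrum_iff_isRoot_charpoly, charpoly_fin_two]

theorem Matrix.spectrum_fin_two_eq {K : Type*} [Field K] [NeZero (2 : K)]
    (A : Matrix (Fin 2) (Fin 2) K) {z : K} (hz : z ^ 2 = A.trace ^ 2 / 4 - A.det) :
    spectrum K A = {A.trace / 2 + z, A.trace / 2 - z} := by
  have h4 : (4 : K) = 2 ^ 2 := by norm_num
  have hdiscrim : discrim 1 (-A.trace) A.det = (2 * z) * (2 * z) := by
    rw [discrim, ← sq, mul_pow, hz, h4]
    field_simp
  ext μ
  rw [mem_spectrum_fin_two_iff, Set.mem_insert_iff, Set.mem_singleton_iff]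
  convert quadratic_eq_zero_iff one_ne_zero hdiscrim μ using 3
  · ring
  all_goals field_simp

theorem Complex.re_neg_of_sq_add_mul_add_eq_zero {b c : ℝ} (hb : 0 < b) (hc : 0 < c) {μ : ℂ}
    (hμ : μ ^ 2 + b * μ + c = 0) : μ.re < 0 := by
  have hre : μ.re * μ.re - μ.im * μ.im + b * μ.re + c = 0 := by
    simpa [sq] using congrArg Complex.re hμ
  have him : μ.re * μ.im + μ.im * μ.re + b * μ.im = 0 := by
    simpa [sq] using congrArg Complex.im hμ
  rcases mul_eq_zero.mp (show μ.im * (2 * μ.re + b) = 0 by linear_combination him) with h | h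
  · rw [h] at hre
    nlinarith
  · linarith

theorem dirac_gan_gradient_penalty_eigenvalues
    (f : ℝ → ℝ) (hf : ContDiff ℝ 1 f) (hf0 : deriv f 0 ≠ 0) (γ : ℝ) (hγ : 0 < γ)
    (v : (Fin 2 → ℝ) → (Fin 2 → ℝ))
    (hv : ∀ x : Fin 2 → ℝ,
      v x = ![-(deriv f (x 0 * x 1)) * x 1, deriv f (x 0 * x 1) * x 0 - γ * x 1]) :
    HasFDerivAt v
      (LinearMap.toContinuousLinearMap
        (Matrix.toLin'
          (!![0, -(deriv f 0); deriv f 0, -γ] : Matrix (Fin 2) (Fin 2) ℝ)))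
      0 ∧
    (∃ z : ℂ, z ^ 2 = (Complex.ofReal γ) ^ 2 / 4 - (Complex.ofReal (deriv f 0)) ^ 2 ∧
      spectrum ℂ
          ((!![0, -(deriv f 0); deriv f 0, -γ] : Matrix (Fin 2) (Fin 2) ℝ).map
            Complex.ofReal)
        = {-(Complex.ofReal γ) / 2 + z, -(Complex.ofReal γ) / 2 - z}) ∧
    (∀ lam ∈ spectrum ℂ
        ((!![0, -(deriv f 0); deriv f 0, -γ] : Matrix (Fin 2) (Fin 2) ℝ).map
          Complex.ofReal),
      lam.re < 0) := by
  obtain rfl : v = _ := funext hv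
  set B := (!![0, -(deriv f 0); deriv f 0, -γ] : Matrix (Fin 2) (Fin 2) ℝ).map Complex.ofReal
  have htrace : B.trace = -γ := by simp [B, trace_fin_two]
  have hdet : B.det = (deriv f 0 ^ 2 : ℝ) := by simp [B, det_fin_two, sq]
  refine ⟨hasFDerivAt_diracGAN_penalizedField_zero (hf.continuous_deriv le_rfl) γ, ?_,
    fun μ hμ => ?_⟩
  · obtain ⟨z, hz⟩ := IsAlgClosed.exists_pow_nat_eq
      ((γ : ℂ) ^ 2 / 4 - ((deriv f 0 : ℝ) : ℂ) ^ 2) (n := 2) two_pos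
    refine ⟨z, hz, ?_⟩
    rw [spectrum_fin_two_eq B (z := z) (by rw [hz, htrace, hdet]; push_cast; ring), htrace]
  · rw [mem_spectrum_fin_two_iff, htrace, hdet, neg_mul, sub_neg_eq_add] at hμ
    exact Complex.re_neg_of_sq_add_mul_add_eq_zero hγ (by positivity) hμ
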